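/- In a symmetric enhanced Leibniz algebra, the default of the operation ∗ to be an action is governed by the anomaly: for all v₁, v₂ ∈ V and w ∈ W, v₁ ∗ (v₂ ∗ w) − v₂ ∗ (v₁ ∗ w) − {v₁,v₂} ∗ w = γ(v₁, v₂, t(w)). -/

import Mathlib

/-! Each axiom (b)–(d) is quadratic in one variable, so it polarizes to a bilinear identity.
Polarizing (d) with one argument in the image of `t` and using (a) gives `[v, t w] = 2 t(v ∘ t w)`;
polarizing (c) expresses `t w ∘ [v₁, v₂]` through brackets with `t w`. Substituting both, the
difference of the two sides collapses to `t w ∘ t(v₁ ∘ v₂) + t(v₁ ∘ v₂) ∘ t w`, which vanishes by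
the polarization of (b). -/

/-- The operation `v ∗ w := t(w) ∘ v` of an enhanced Leibniz algebra. -/
def elaStar {K V W : Type*} [Field K] [AddCommGroup V] [Module K V]
    [AddCommGroup W] [Module K W]
    (t : W →ₗ[K] V) (c : V →ₗ[K] V →ₗ[K] W) (v : V) (w : W) : W :=
  c (t w) v

/-- The antisymmetrized bracket `{v₁,v₂} := [v₁,v₂] − t(v₁ ∘ v₂)`. -/
def elaBrace {K V W : Type*} [Field K] [AddCommGroup V] [Module K V]
    [AddCommGroup W] [Module K W]
    (t : W →ₗ[K] V) (br : V →ₗ[K] V →ₗ[K] V) (c : V →ₗ[K] V →ₗ[K] W)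
    (v₁ v₂ : V) : V :=
  br v₁ v₂ - t (c v₁ v₂)

/-- The anomaly `γ` of an enhanced Leibniz algebra. -/
def elaGamma {K V W : Type*} [Field K] [AddCommGroup V] [Module K V]
    [AddCommGroup W] [Module K W]
    (t : W →ₗ[K] V) (br : V →ₗ[K] V →ₗ[K] V) (c : V →ₗ[K] V →ₗ[K] W)
    (v₁ v₂ v₃ : V) : W :=
  - c v₁ (br v₂ v₃) + c (br v₁ v₂) v₃ + c v₂ (br v₁ v₃)
    - c (t (c v₂ v₃)) v₁ - c (t (c v₁ v₂)) v₃ + c (t (c v₁ v₃)) v₂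

section EnhancedLeibniz

variable {R V W : Type*} [CommSemiring R] [AddCommGroup V] [Module R V]
  [AddCommGroup W] [Module R W]
  {t : W →ₗ[R] V} {br : V →ₗ[R] V →ₗ[R] V} {c : V →ₗ[R] V →ₗ[R] W}

theorem LinearMap.add_swap_eq_of_apply_self_eq {f g : V →ₗ[R] V →ₗ[R] W}
    (h : ∀ v, f v v = g v v) (u v : V) : f u v + f v u = g u v + g v u := by
  have huv := h (u + v)
  simp only [map_add, LinearMap.add_apply, h u, h v] at huv
  linear_combination (norm := module) huv

theorem pairing_image_add_pairing_image_swap (axb : ∀ w, c (t w) (t w) = 0) (w w' : W) :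
    c (t w) (t w') + c (t w') (t w) = 0 := by
  simpa using LinearMap.add_swap_eq_of_apply_self_eq (f := c.compl₁₂ t t) (g := 0) axb w w'

theorem bracket_image_right_eq (axa : ∀ w v, br (t w) v = 0)
    (axd : ∀ v, br v v = t (c v v)) (hsym : ∀ u v, c u v = c v u) (v : V) (w : W) :
    br v (t w) = t (c v (t w)) + t (c v (t w)) := by
  have h := LinearMap.add_swap_eq_of_apply_self_eq (f := br) (g := c.compr₂ t) axd v (t w)
  simpa [axa, hsym (t w) v] using h

theorem pairing_image_bracket (axa : ∀ w v, br (t w) v = 0)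
    (axc : ∀ u v, c u (br v v) = c v (br u v)) (v₁ v₂ : V) (w : W) :
    c (t w) (br v₁ v₂) = c v₁ (br v₂ (t w)) - c v₂ (br v₁ (t w)) := by
  have h := LinearMap.add_swap_eq_of_apply_self_eq
    (f := br.compr₂ (c v₁)) (g := c.compl₂ (br v₁)) (axc v₁) v₂ (t w)
  simp only [LinearMap.compr₂_apply, LinearMap.compl₂_apply, axa, map_zero, add_zero] at h
  rw [h]; abel

end EnhancedLeibniz

theorem sela_star_action_anomaly_general
    {K : Type*} [Field K]
    {V W : Type*} [AddCommGroup V] [Module K V] [AddCommGroup W] [Module K W]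
    (t : W →ₗ[K] V) (br : V →ₗ[K] V →ₗ[K] V) (c : V →ₗ[K] V →ₗ[K] W)
    (axa : ∀ (w : W) (v : V), br (t w) v = 0)
    (axb : ∀ w : W, c (t w) (t w) = 0)
    (axc : ∀ u v : V, c u (br v v) = c v (br u v))
    (axd : ∀ v : V, br v v = t (c v v))
    (hsym : ∀ u v : V, c u v = c v u) :
    ∀ (v₁ v₂ : V) (w : W),
      elaStar t c v₁ (elaStar t c v₂ w) - elaStar t c v₂ (elaStar t c v₁ w)
        - elaStar t c (elaBrace t br c v₁ v₂) w
      = elaGamma t br c v₁ v₂ (t w) := by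
  intro v₁ v₂ w
  have hcross := pairing_image_add_pairing_image_swap axb w (c v₁ v₂)
  simp only [elaStar, elaBrace, elaGamma, map_sub]
  rw [hsym (br v₁ v₂), pairing_image_bracket axa axc, bracket_image_right_eq axa axd hsym,
    bracket_image_right_eq axa axd hsym, hsym (t w) v₁, hsym (t w) v₂, hsym (t (c v₁ (t w))) v₂,
    hsym (t (c v₂ (t w))) v₁, map_add, map_add]
  linear_combination (norm := module) hcross

/-- In a symmetric enhanced Leibniz algebra, the default of `∗` to be an action is
governed by the anomaly. -/
theorem sela_star_action_anomaly
    {K : Type*} [Field K] (h2 : (2 : K) ≠ 0)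
    {V W : Type*} [AddCommGroup V] [Module K V] [AddCommGroup W] [Module K W]
    (t : W →ₗ[K] V) (br : V →ₗ[K] V →ₗ[K] V) (c : V →ₗ[K] V →ₗ[K] W)
    (leib : ∀ v₁ v₂ v₃ : V, br v₁ (br v₂ v₃) = br (br v₁ v₂) v₃ + br v₂ (br v₁ v₃))
    (axa : ∀ (w : W) (v : V), br (t w) v = 0)
    (axb : ∀ w : W, c (t w) (t w) = 0)
    (axc : ∀ u v : V, c u (br v v) = c v (br u v))
    (axd : ∀ v : V, br v v = t (c v v))
    (hsym : ∀ u v : V, c u v = c v u) :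
    ∀ (v₁ v₂ : V) (w : W),
      elaStar t c v₁ (elaStar t c v₂ w) - elaStar t c v₂ (elaStar t c v₁ w)
        - elaStar t c (elaBrace t br c v₁ v₂) w
      = elaGamma t br c v₁ v₂ (t w) :=
  sela_star_action_anomaly_general t br c axa axb axc axd hsym
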